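/- arXiv:2303.10194 — 11 statements merged into one kernel-verified Lean document; each statement's English description precedes it below -/
import Mathlib

section
/- For any function f : S → X from a nonempty set S to a topological space X, and any ideals I and K on S, the set of I^K-cluster points of f is a closed subset of X. -/
/-!
If some `A ∈ I` lies outside `K`, then with `M = Aᶜ` the modified function sends all of `A`
to `x`, so every neighbourhood of `x` pulls back to a superset of `A`: every point is an
`I^K`-cluster point. Otherwise `I ⊆ K`, and changing `f` off a set of `F(I)` only changes
preimages by a set of `K`, so the `I^K`-cluster points are the `K`-cluster points of `f`;
a neighbourhood whose preimage lies in `K` witnesses this failure for all of its points.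
-/

open Set Topology

attribute [local instance] Classical.propDecidable

variable {S X : Type*}

/-- An ideal on a set: family of subsets closed under subsets and finite unions. -/
def IsIdeal (I : Set (Set S)) : Prop :=
  ∅ ∈ I ∧ (∀ ⦃A B : Set S⦄, A ∈ I → B ⊆ A → B ∈ I) ∧
    ∀ ⦃A B : Set S⦄, A ∈ I → B ∈ I → A ∪ B ∈ I

/-- An admissible ideal: nontrivial ideal containing all singletons. -/
def IsAdmissible (I : Set (Set S)) : Prop :=
  IsIdeal I ∧ Set.univ ∉ I ∧ ∀ s : S, {s} ∈ I

/-- `x` is an `I^K`-cluster point of `f`: there is `M ∈ F(I)` (i.e. `Mᶜ ∈ I`) such that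
the function equal to `f` on `M` and constantly `x` off `M` has `x` as a `K`-cluster point. -/
def IKClusterPt [TopologicalSpace X] (I K : Set (Set S)) (f : S → X) (x : X) : Prop :=
  ∃ M : Set S, Mᶜ ∈ I ∧ ∀ U : Set X, IsOpen U → x ∈ U →
    {s : S | (if s ∈ M then f s else x) ∈ U} ∉ K

section

variable [TopologicalSpace X]

def IsKClusterPt (K : Set (Set S)) (g : S → X) (x : X) : Prop :=
  ∀ U : Set X, IsOpen U → x ∈ U → g ⁻¹' U ∉ K

theorem isClosed_setOf_isKClusterPt (K : Set (Set S)) (g : S → X) :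
    IsClosed {x | IsKClusterPt K g x} := by
  rw [← isOpen_compl_iff, isOpen_iff_forall_mem_open]
  intro x hx
  simp only [IsKClusterPt, mem_compl_iff, mem_ofPred_eq, not_forall, not_not] at hx
  obtain ⟨U, hU, hxU, hgU⟩ := hx
  exact ⟨U, fun y hyU hy => hy U hU hyU hgU, hU, hxU⟩

theorem ikClusterPt_iff_isKClusterPt {I K : Set (Set S)} (hI : IsIdeal I) (hK : IsIdeal K)
    (hIK : I ⊆ K) {f : S → X} {x : X} : IKClusterPt I K f x ↔ IsKClusterPt K f x := by
  constructor
  · rintro ⟨M, hM, hcluster⟩ U hU hxU hfU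
    refine hcluster U hU hxU (hK.2.1 (hK.2.2 hfU (hIK hM)) fun s hs => ?_)
    by_cases hsM : s ∈ M
    · exact Or.inl (by simpa [hsM] using hs)
    · exact Or.inr hsM
  · intro hcluster
    refine ⟨univ, by simpa using hI.1, fun U hU hxU => ?_⟩
    simpa [preimage] using hcluster U hU hxU

theorem ikClusterPt_of_not_subset {I K : Set (Set S)} (hK : IsIdeal K) (hIK : ¬I ⊆ K)
    (f : S → X) (x : X) : IKClusterPt I K f x := by
  obtain ⟨A, hAI, hAK⟩ := not_subset.mp hIK
  refine ⟨Aᶜ, by simpa using hAI, fun U _ hxU hmem => hAK (hK.2.1 hmem fun s hs => ?_)⟩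
  simpa [hs] using hxU

end

theorem closed_IKClusterPts_general [TopologicalSpace X]
    (I K : Set (Set S)) (hI : IsIdeal I) (hK : IsIdeal K) (f : S → X) :
    IsClosed {x : X | IKClusterPt I K f x} := by
  by_cases hIK : I ⊆ K
  · simp_rw [ikClusterPt_iff_isKClusterPt hI hK hIK]
    exact isClosed_setOf_isKClusterPt K f
  · simp only [ikClusterPt_of_not_subset hK hIK, ofPred_true, isClosed_univ]

theorem closed_IKClusterPts [TopologicalSpace X] [Nonempty S]
    (I K : Set (Set S)) (hI : IsIdeal I) (hK : IsIdeal K) (f : S → X) :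
    IsClosed {x : X | IKClusterPt I K f x} :=
  closed_IKClusterPts_general I K hI hK f
end

section
/- Let X be a topological space with a countable dense subset in every closed set (completely separable, i.e., second countable), S a nonempty set, and I, K ideals on S with I ⊆ K. Suppose there exists a sequence (T_p)_{p∈ℕ} of pairwise disjoint subsets of S with T_p ∉ K for all p. Then for every nonempty closed set C ⊆ X there is a function f : S → X with C_f(I^K) = C. -/
open Set Topology

attribute [local instance] Classical.propDecidable

variable {S X : Type*}

/-! Enumerate a countable dense subset of `C` as `g : ℕ → C` and let `f` take the value `g p`
on `T p`. An open `U` around a point of `C = closure (range g)` contains some `g p`, so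
`f ⁻¹' U ⊇ T p ∉ K`; taking `M = univ` makes every point of `C` an `I^K`-cluster point.
Conversely, an `I^K`-cluster point `x` lies in `closure (range f) ⊆ C`: otherwise the modified
function can only meet the open set `Cᶜ` off `M`, that is on a set in `I ⊆ K`. -/

open Function

theorem IsClosed.exists_closure_range_eq [TopologicalSpace X] [SecondCountableTopology X]
    {C : Set X} (hC : IsClosed C) (hCne : C.Nonempty) :
    ∃ g : ℕ → X, closure (range g) = C := by
  have : Nonempty C := hCne.to_subtype
  obtain ⟨u, hu⟩ := TopologicalSpace.exists_dense_seq C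
  refine ⟨Subtype.val ∘ u, subset_antisymm ?_ fun x hx => ?_⟩
  · exact closure_minimal (range_subset_iff.mpr fun p => (u p).2) hC
  · rw [range_comp]
    exact image_closure_subset_closure_image continuous_subtype_val
      ⟨⟨x, hx⟩, hu.closure_range ▸ mem_univ _, rfl⟩

theorem exists_forall_mem_eq_of_pairwise_disjoint {ι : Type*} [Nonempty ι] {T : ι → Set S}
    (hT : Pairwise (Disjoint on T)) (g : ι → X) :
    ∃ f : S → X, range f ⊆ range g ∧ ∀ i, ∀ s ∈ T i, f s = g i := by
  refine ⟨fun s => if h : ∃ i, s ∈ T i then g h.choose else g (Classical.arbitrary ι),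
    range_subset_iff.mpr fun s => ?_, fun i s hs => ?_⟩
  · split <;> exact mem_range_self _
  · have h : ∃ i, s ∈ T i := ⟨i, hs⟩
    have hi : h.choose = i := by
      by_contra hne
      exact disjoint_left.mp (hT hne) h.choose_spec hs
    simp only [dif_pos h, hi]

section IKClusterPt

variable [TopologicalSpace X] {I K : Set (Set S)} {f : S → X} {x : X}

theorem IKClusterPt.mem_closure_range (hK : IsIdeal K) (hIK : I ⊆ K)
    (h : IKClusterPt I K f x) : x ∈ closure (range f) := by
  obtain ⟨M, hM, hMx⟩ := h
  by_contra hx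
  refine hMx _ isClosed_closure.isOpen_compl hx (hK.2.1 (hIK hM) fun s hs hsM => ?_)
  simp only [mem_ofPred_eq, if_pos hsM, mem_compl_iff] at hs
  exact hs (subset_closure (mem_range_self s))

theorem IKClusterPt.of_forall_preimage_notMem (hI : IsIdeal I)
    (h : ∀ U : Set X, IsOpen U → x ∈ U → f ⁻¹' U ∉ K) : IKClusterPt I K f x :=
  ⟨univ, by simpa using hI.1, fun U hU hxU => by simp only [mem_univ, if_true]; exact h U hU hxU⟩

theorem preimage_notMem_of_mem_closure_range {T : ℕ → Set S} {g : ℕ → X} (hK : IsIdeal K)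
    (hT : ∀ p, T p ∉ K) (hfg : ∀ p, ∀ s ∈ T p, f s = g p) (hx : x ∈ closure (range g))
    {U : Set X} (hU : IsOpen U) (hxU : x ∈ U) : f ⁻¹' U ∉ K := by
  obtain ⟨_, hgU, p, rfl⟩ := mem_closure_iff.mp hx U hU hxU
  exact fun hfU => hT p (hK.2.1 hfU fun s hs => by simpa [mem_preimage, hfg p s hs] using hgU)

theorem setOf_IKClusterPt_eq_closure_range {T : ℕ → Set S} {g : ℕ → X} (hI : IsIdeal I)
    (hK : IsIdeal K) (hIK : I ⊆ K) (hT : ∀ p, T p ∉ K) (hf : range f ⊆ range g)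
    (hfg : ∀ p, ∀ s ∈ T p, f s = g p) :
    {x : X | IKClusterPt I K f x} = closure (range g) :=
  subset_antisymm (fun _ hx => closure_mono hf (hx.mem_closure_range hK hIK)) fun _ hx =>
    .of_forall_preimage_notMem hI fun _ hU hxU =>
      preimage_notMem_of_mem_closure_range hK hT hfg hx hU hxU

end IKClusterPt

theorem closed_eq_IKClusterPts_general [TopologicalSpace X] [SecondCountableTopology X]
    (I K : Set (Set S)) (hI : IsIdeal I) (hK : IsIdeal K) (hIK : I ⊆ K)
    (T : ℕ → Set S) (hdisj : ∀ i j, i ≠ j → T i ∩ T j = ∅) (hT : ∀ p, T p ∉ K)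
    (C : Set X) (hCne : C.Nonempty) (hC : IsClosed C) :
    ∃ f : S → X, {x : X | IKClusterPt I K f x} = C := by
  obtain ⟨g, hg⟩ := hC.exists_closure_range_eq hCne
  obtain ⟨f, hf, hfg⟩ := exists_forall_mem_eq_of_pairwise_disjoint
    (fun i j hij => disjoint_iff_inter_eq_empty.mpr (hdisj i j hij)) g
  exact ⟨f, hg ▸ setOf_IKClusterPt_eq_closure_range hI hK hIK hT hf hfg⟩

theorem closed_eq_IKClusterPts [TopologicalSpace X] [SecondCountableTopology X] [Nonempty S]
    (I K : Set (Set S)) (hI : IsIdeal I) (hK : IsIdeal K) (hIK : I ⊆ K)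
    (T : ℕ → Set S) (hdisj : ∀ i j, i ≠ j → T i ∩ T j = ∅) (hT : ∀ p, T p ∉ K)
    (C : Set X) (hCne : C.Nonempty) (hC : IsClosed C) :
    ∃ f : S → X, {x : X | IKClusterPt I K f x} = C :=
  closed_eq_IKClusterPts_general I K hI hK hIK T hdisj hT C hCne hC
end

section
/- Let A be a compact subset of a topological space X, I and K ideals on a set S, and f : S → X a function. If {s ∈ S : f(s) ∈ A} ∉ K, then A contains at least one I^K-cluster point of f. -/
open Set Topology

attribute [local instance] Classical.propDecidable

variable {S X : Type*}

/-! A set lies outside `K` exactly when it holds frequently along the dual filter `F(K)`, so the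
hypothesis says that `f` is frequently in `A` along `F(K)`. Compactness of `A` then gives a cluster
point `x ∈ A` of `f` along `F(K)`, and `x` is an `I^K`-cluster point witnessed by `M = S`. -/

namespace IsIdeal

variable {K : Set (Set S)}

/-- The dual filter `F(K) = {t | tᶜ ∈ K}`. -/
def dualFilter (hK : IsIdeal K) : Filter S :=
  Filter.comk (· ∈ K) hK.1 (fun _ ht _ hst => hK.2.1 ht hst) (fun _ hs _ ht => hK.2.2 hs ht)

theorem frequently_dualFilter_iff (hK : IsIdeal K) {p : S → Prop} :
    (∃ᶠ s in hK.dualFilter, p s) ↔ {s | p s} ∉ K := by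
  simp only [Filter.Frequently, dualFilter, Filter.eventually_iff, Filter.mem_comk, compl_ofPred,
    not_not]

end IsIdeal

theorem IKClusterPt.of_mapClusterPt [TopologicalSpace X] {I K : Set (Set S)} (hI : ∅ ∈ I)
    (hK : IsIdeal K) {f : S → X} {x : X} (hx : MapClusterPt x hK.dualFilter f) :
    IKClusterPt I K f x := by
  refine ⟨univ, by rwa [compl_univ], fun U hU hxU => ?_⟩
  simpa only [mem_univ, if_true] using
    hK.frequently_dualFilter_iff.1 (mapClusterPt_iff_frequently.1 hx U (hU.mem_nhds hxU))

theorem compact_meets_IKClusterPts [TopologicalSpace X] (A : Set X) (hA : IsCompact A)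
    (I K : Set (Set S)) (hI : IsIdeal I) (hK : IsIdeal K) (f : S → X)
    (hf : {s : S | f s ∈ A} ∉ K) :
    ∃ x ∈ A, IKClusterPt I K f x := by
  obtain ⟨x, hxA, hx⟩ := hA.exists_mapClusterPt_of_frequently (hK.frequently_dualFilter_iff.2 hf)
  exact ⟨x, hxA, .of_mapClusterPt hI.1 hK hx⟩
end

section
/- Let (X, 𝕌) be a boundedly compact Hausdorff uniform space (every closed bounded set is compact). Then the map Γ sending each bounded sequence x = (x_n) to its set of I^K-cluster points C_x(I^K) is uniformly continuous from the space of bounded sequences with the sup-uniformity to the hyperspace of nonempty compact subsets with the Hausdorff–Bourbaki uniformity. -/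
open Set Topology

attribute [local instance] Classical.propDecidable

variable {S X : Type*}

/-- A sequence is bounded in a uniform space. -/
def BddSeq [UniformSpace X] (x : ℕ → X) : Prop :=
  ∃ a : X, ∃ V ∈ uniformity X, ∀ n, (a, x n) ∈ V

/-!
With the dual filter `K* = {A | Aᶜ ∈ K}`, `p` is an `I^K`-cluster point of `x` iff, for some
`M ∈ F(I)`, `p` is a cluster point along `K*` of the sequence equal to `x` on `M` and to `p` off
`M`. If `M ∉ K*`, that sequence is frequently `p` whatever `x` is, so `p` is also an
`I^K`-cluster point of `y`. If `M ∈ K*`, the modification is invisible along `K*`; when `y` is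
`W`-close to `x`, it frequently lies in `ball p V` (where `W ○ W ⊆ V`), which is compact for a
closed `V` by bounded compactness, so `y` has a cluster point along `K*` in `ball p V`.
-/

open Filter Uniformity UniformSpace SetRel

def IsIdeal.dualFilter_s7 {K : Set (Set S)} (hK : IsIdeal K) : Filter S :=
  comk (· ∈ K) hK.1 (fun _ ht _ hst => hK.2.1 ht hst) (fun _ hs _ ht => hK.2.2 hs ht)

theorem IsIdeal.frequently_dualFilter {K : Set (Set S)} (hK : IsIdeal K) {P : S → Prop} :
    (∃ᶠ s in hK.dualFilter_s7, P s) ↔ {s | P s} ∉ K := by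
  simp only [Filter.Frequently, Filter.Eventually, IsIdeal.dualFilter_s7, mem_comk, Set.compl_ofPred,
    not_not]

theorem ikClusterPt_iff_mapClusterPt [TopologicalSpace X] {I K : Set (Set S)} (hK : IsIdeal K)
    {f : S → X} {p : X} :
    IKClusterPt I K f p ↔
      ∃ M : Set S, Mᶜ ∈ I ∧ MapClusterPt p hK.dualFilter_s7 (fun s => if s ∈ M then f s else p) := by
  simp only [IKClusterPt, (nhds_basis_opens p).mapClusterPt_iff_frequently,
    hK.frequently_dualFilter, and_imp]
  exact exists_congr fun M => and_congr_right fun _ => forall_congr' fun U => forall_comm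

theorem mapClusterPt_ite_of_notMem [TopologicalSpace X] {F : Filter S} {M : Set S} (hM : M ∉ F)
    (f : S → X) (p : X) : MapClusterPt p F (fun s => if s ∈ M then f s else p) :=
  mapClusterPt_iff_frequently.2 fun _ hU =>
    (not_eventually.1 hM).mono fun s (hs : s ∉ M) => by rw [if_neg hs]; exact mem_of_mem_nhds hU

theorem ite_eventuallyEq_of_mem {F : Filter S} {M : Set S} (hM : M ∈ F) (f : S → X) (p : X) :
    (fun s => if s ∈ M then f s else p) =ᶠ[F] f :=
  eventually_of_mem hM fun _ hs => if_pos hs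

section UniformSpace

variable [UniformSpace X] {x y : S → X} {p : X} {V W : SetRel X X}

theorem MapClusterPt.exists_mapClusterPt_of_forall_mem {F : Filter S}
    (hp : MapClusterPt p F x) (hW : W ∈ 𝓤 X) (hWV : W ○ W ⊆ V) (hxy : ∀ s, (x s, y s) ∈ W)
    (hV : IsCompact (ball p V)) : ∃ c ∈ ball p V, MapClusterPt c F y :=
  hV.exists_mapClusterPt_of_frequently <|
    (hp.frequently (ball_mem_nhds p hW)).mono fun s hs => hWV (SetRel.prodMk_mem_comp hs (hxy s))

theorem IKClusterPt.exists_of_forall_mem {I K : Set (Set S)} (hK : IsIdeal K)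
    (hp : IKClusterPt I K x p) (hW : W ∈ 𝓤 X) (hWV : W ○ W ⊆ V) (hxy : ∀ s, (x s, y s) ∈ W)
    (hV : IsCompact (ball p V)) : ∃ c ∈ ball p V, IKClusterPt I K y c := by
  simp only [ikClusterPt_iff_mapClusterPt hK] at hp ⊢
  obtain ⟨M, hMI, hp⟩ := hp
  by_cases hM : M ∈ hK.dualFilter_s7
  · obtain ⟨c, hc, hcy⟩ := ((ite_eventuallyEq_of_mem hM x p).mapClusterPt_iff.1 hp
      ).exists_mapClusterPt_of_forall_mem hW hWV hxy hV
    exact ⟨c, hc, M, hMI, (ite_eventuallyEq_of_mem hM y c).mapClusterPt_iff.2 hcy⟩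
  · have hpp : (p, p) ∈ V :=
      hWV (SetRel.prodMk_mem_comp (refl_mem_uniformity hW) (refl_mem_uniformity hW))
    exact ⟨p, hpp, M, hMI, mapClusterPt_ite_of_notMem hM y p⟩

end UniformSpace

theorem gamma_uniformContinuous_general [UniformSpace X]
    (hbc : ∀ C : Set X, IsClosed C →
      (∃ a : X, ∃ V ∈ uniformity X, ∀ b ∈ C, (a, b) ∈ V) → IsCompact C)
    (I K : Set (Set ℕ)) (hK : IsIdeal K) :
    ∀ U ∈ uniformity X, ∃ V ∈ uniformity X, ∀ x y : ℕ → X,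
      BddSeq x → BddSeq y → (∀ n, (x n, y n) ∈ V) →
      ({p : X | IKClusterPt I K x p} ⊆
          {b : X | ∃ c : X, IKClusterPt I K y c ∧ (c, b) ∈ U}) ∧
      ({p : X | IKClusterPt I K y p} ⊆
          {b : X | ∃ c : X, IKClusterPt I K x c ∧ (c, b) ∈ U}) := by
  intro U hU
  obtain ⟨V, ⟨hV, hVclosed⟩, hVU⟩ :=
    uniformity_hasBasis_closed.mem_iff.1 (tendsto_swap_uniformity hU)
  obtain ⟨W, hW, hWsymm, hWV⟩ := comp_symm_mem_uniformity_sets hV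
  have hball : ∀ p, IsCompact (ball p V) := fun p =>
    hbc _ (isClosed_ball p hVclosed) ⟨p, V, hV, fun _ hb => hb⟩
  have hclose : ∀ x y : ℕ → X, (∀ n, (x n, y n) ∈ W) →
      {p | IKClusterPt I K x p} ⊆ {b | ∃ c, IKClusterPt I K y c ∧ (c, b) ∈ U} := by
    intro x y hxy p hp
    obtain ⟨c, hc, hcy⟩ := hp.exists_of_forall_mem hK hW hWV hxy (hball p)
    exact ⟨c, hcy, hVU hc⟩
  exact ⟨W, hW, fun x y _ _ hxy => ⟨hclose x y hxy, hclose y x fun n => SetRel.symm W (hxy n)⟩⟩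

theorem gamma_uniformContinuous [UniformSpace X] [T2Space X]
    (hbc : ∀ C : Set X, IsClosed C →
      (∃ a : X, ∃ V ∈ uniformity X, ∀ b ∈ C, (a, b) ∈ V) → IsCompact C)
    (I K : Set (Set ℕ)) (hI : IsIdeal I) (hK : IsIdeal K) :
    ∀ U ∈ uniformity X, ∃ V ∈ uniformity X, ∀ x y : ℕ → X,
      BddSeq x → BddSeq y → (∀ n, (x n, y n) ∈ V) →
      ({p : X | IKClusterPt I K x p} ⊆
          {b : X | ∃ c : X, IKClusterPt I K y c ∧ (c, b) ∈ U}) ∧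
      ({p : X | IKClusterPt I K y p} ⊆
          {b : X | ∃ c : X, IKClusterPt I K x c ∧ (c, b) ∈ U}) :=
  gamma_uniformContinuous_general hbc I K hK
end

section
/- If K ⊆ I are ideals on S, then every I^K-Fréchet compact topological space is Fréchet compact (limit point compact). -/
open Set Topology

attribute [local instance] Classical.propDecidable

variable {S X : Type*}

/-- `f` restricted to `A` is `K/_A`-convergent to `x`. -/
def KConvOn [TopologicalSpace X] (K : Set (Set S)) (A : Set S) (f : S → X) (x : X) : Prop :=
  ∀ U : Set X, IsOpen U → x ∈ U → {s ∈ A | f s ∉ U} ∈ K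

/-- `f : A → X` is `(I/_A)^K`-convergent to `x`. -/
def IKConvOn [TopologicalSpace X] (I K : Set (Set S)) (A : Set S) (f : S → X) (x : X) : Prop :=
  ∃ M : Set S, M ⊆ A ∧ A \ M ∈ I ∧
    KConvOn K A (fun s => if s ∈ M then f s else x) x

/-- The `K`-closure of `C`: points to which some `K`-nonthin function into `C`
`K/_A`-converges. -/
def KClosureSet [TopologicalSpace X] (K : Set (Set S)) (C : Set X) : Set X :=
  {x | ∃ A : Set S, A ∉ K ∧ ∃ f : S → X, (∀ s ∈ A, f s ∈ C) ∧ KConvOn K A f x}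

/-- The `I^K`-closure of `C`: points to which some `I`-nonthin function into `C`
`(I/_A)^K`-converges. -/
def IKClosureSet [TopologicalSpace X] (I K : Set (Set S)) (C : Set X) : Set X :=
  {x | ∃ A : Set S, A ∉ I ∧ ∃ f : S → X, (∀ s ∈ A, f s ∈ C) ∧ IKConvOn I K A f x}

/-- `α` is an `I_{ev}`-limit point of `Y`. -/
def IEvLimitPt [TopologicalSpace X] (I : Set (Set S)) (Y : Set X) (α : X) : Prop :=
  ∃ A : Set S, A ∉ I ∧ ∃ f : S → X, (∀ s ∈ A, f s ∈ Y \ {α}) ∧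
    {s ∈ A | f s ≠ α} ∉ I ∧ KConvOn I A f α

/-- `α` is an `I^K_{ev}`-limit point of `Y`. -/
def IKEvLimitPt [TopologicalSpace X] (I K : Set (Set S)) (Y : Set X) (α : X) : Prop :=
  ∃ A : Set S, A ∉ I ∧ ∃ f : S → X, (∀ s ∈ A, f s ∈ Y \ {α}) ∧
    {s ∈ A | f s ≠ α} ∉ I ∧ IKConvOn I K A f α

/-- `X` is `I`-Fréchet compact. -/
def IFrechetCompact (I : Set (Set S)) (X : Type*) [TopologicalSpace X] : Prop :=
  ∀ Y : Set X, Y.Infinite → ∃ α : X, IEvLimitPt I Y α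

/-- `X` is `I^K`-Fréchet compact. -/
def IKFrechetCompact (I K : Set (Set S)) (X : Type*) [TopologicalSpace X] : Prop :=
  ∀ Y : Set X, Y.Infinite → ∃ α : X, IKEvLimitPt I K Y α

theorem IsIdeal.mem_of_diff_mem {I : Set (Set S)} (hI : IsIdeal I) {A M : Set S}
    (hM : M ∈ I) (hAM : A \ M ∈ I) : A ∈ I :=
  hI.2.1 (hI.2.2 hM hAM) (by rw [union_sdiff_self]; exact subset_union_right)

theorem ikClosureSet_subset_closure [TopologicalSpace X] {I K : Set (Set S)} (hI : IsIdeal I)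
    (hKI : K ⊆ I) (C : Set X) : IKClosureSet I K C ⊆ closure C := by
  rintro x ⟨A, hA, f, hfC, M, hMA, hAM, hconv⟩
  rw [mem_closure_iff]
  intro U hU hxU
  by_contra hUC
  -- `M` then lies in the `K`-small set where the modified function leaves `U`,
  -- so `A ⊆ M ∪ (A \ M)` would be `I`-small.
  have hM_sub : M ⊆ {s ∈ A | (if s ∈ M then f s else x) ∉ U} := by
    intro s hs
    refine ⟨hMA hs, ?_⟩
    rw [if_pos hs]
    exact fun hfU => hUC ⟨f s, hfU, hfC s (hMA hs)⟩
  exact hA (hI.mem_of_diff_mem (hI.2.1 (hKI (hconv U hU hxU)) hM_sub) hAM)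

theorem IKEvLimitPt.mem_ikClosureSet [TopologicalSpace X] {I K : Set (Set S)} {Y : Set X}
    {α : X} (h : IKEvLimitPt I K Y α) : α ∈ IKClosureSet I K (Y \ {α}) := by
  obtain ⟨A, hA, f, hf, -, hconv⟩ := h
  exact ⟨A, hA, f, hf, hconv⟩

theorem IKFrechet_implies_frechet_general [TopologicalSpace X]
    (I K : Set (Set S)) (hI : IsIdeal I) (hKI : K ⊆ I)
    (h : IKFrechetCompact I K X) :
    ∀ Y : Set X, Y.Infinite → ∃ α : X, α ∈ closure (Y \ {α}) := by
  intro Y hY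
  obtain ⟨α, hα⟩ := h Y hY
  exact ⟨α, ikClosureSet_subset_closure hI hKI _ hα.mem_ikClosureSet⟩

theorem IKFrechet_implies_frechet [TopologicalSpace X]
    (I K : Set (Set S)) (hI : IsIdeal I) (hK : IsIdeal K) (hKI : K ⊆ I)
    (h : IKFrechetCompact I K X) :
    ∀ Y : Set X, Y.Infinite → ∃ α : X, α ∈ closure (Y \ {α}) :=
  IKFrechet_implies_frechet_general I K hI hKI h
end

section
/- If K ⊆ I are ideals on S, then every I^K-Fréchet compact topological space is I-Fréchet compact. -/
open Set Topology

attribute [local instance] Classical.propDecidable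

variable {S X : Type*}

section Convergence

variable [TopologicalSpace X] {I K : Set (Set S)} {A M : Set S} {f : S → X} {x : X}

theorem KConvOn.mono_ideal (hKI : K ⊆ I) (h : KConvOn K A f x) : KConvOn I A f x :=
  fun U hU hx => hKI (h U hU hx)

theorem KConvOn.of_piecewise (hI : IsIdeal I) (hAM : A \ M ∈ I)
    (h : KConvOn I A (fun s => if s ∈ M then f s else x) x) : KConvOn I A f x := by
  obtain ⟨-, hmono, hunion⟩ := hI
  intro U hU hx
  refine hmono (hunion (h U hU hx) hAM) fun s ⟨hsA, hsU⟩ => ?_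
  by_cases hsM : s ∈ M
  · exact Or.inl ⟨hsA, by simpa [hsM] using hsU⟩
  · exact Or.inr ⟨hsA, hsM⟩

theorem IKConvOn.kConvOn (hI : IsIdeal I) (hKI : K ⊆ I) (h : IKConvOn I K A f x) :
    KConvOn I A f x := by
  obtain ⟨M, -, hAM, hconv⟩ := h
  exact (hconv.mono_ideal hKI).of_piecewise hI hAM

theorem IKEvLimitPt.iEvLimitPt {Y : Set X} (hI : IsIdeal I) (hKI : K ⊆ I)
    (h : IKEvLimitPt I K Y x) : IEvLimitPt I Y x := by
  obtain ⟨A, hA, f, hfY, hne, hconv⟩ := h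
  exact ⟨A, hA, f, hfY, hne, hconv.kConvOn hI hKI⟩

end Convergence

theorem IKFrechet_implies_IFrechet_general [TopologicalSpace X]
    (I K : Set (Set S)) (hI : IsIdeal I) (hKI : K ⊆ I)
    (h : IKFrechetCompact I K X) : IFrechetCompact I X := by
  intro Y hY
  obtain ⟨α, hα⟩ := h Y hY
  exact ⟨α, hα.iEvLimitPt hI hKI⟩

theorem IKFrechet_implies_IFrechet [TopologicalSpace X]
    (I K : Set (Set S)) (hI : IsIdeal I) (hK : IsIdeal K) (hKI : K ⊆ I)
    (h : IKFrechetCompact I K X) : IFrechetCompact I X :=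
  IKFrechet_implies_IFrechet_general I K hI hKI h
end

section
/- Let ℕ = ⋃_j Δ_j be a partition of ℕ into infinitely many pairwise disjoint infinite sets. Let I = {A ⊆ ℕ : A ∩ Δ_i is finite for all but finitely many i} and let K = {A ⊆ ℕ : A intersects at most finitely many Δ_j}. Then I satisfies shrinking condition A(I, K): for every sequence (A_i) of subsets of ℕ with A_i ∉ I for each i, there exist sets B_i ∈ K with B_i ⊆ A_i and ⋃_i B_i ∉ I. -/
open Set Topology

attribute [local instance] Classical.propDecidable

variable {S X : Type*}

/-! Each `A i ∉ I` meets infinitely many blocks `Δ j` in an infinite set, so we can choose pairwise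
distinct blocks `Δ (f i)` with `A i ∩ Δ (f i)` infinite. Then `B i := A i ∩ Δ (f i)` lies in a
single block, hence in `K`, while `⋃ i, B i` meets each of the infinitely many blocks `Δ (f i)` in
an infinite set, hence is not in `I`. -/

open Function

theorem exists_strictMono_forall_mem {α : Type*} [LinearOrder α] [LocallyFiniteOrderBot α]
    {s : ℕ → Set α} (hs : ∀ i, (s i).Infinite) : ∃ f : ℕ → α, StrictMono f ∧ ∀ i, f i ∈ s i := by
  choose g hg_mem hg_gt using fun i (b : α) => (hs i).exists_gt b
  let f : ℕ → α := fun i => Nat.rec (hs 0).nonempty.some (fun n fn => g (n + 1) fn) i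
  refine ⟨f, strictMono_nat_of_lt_succ fun n => hg_gt (n + 1) _, ?_⟩
  rintro (_ | n)
  · exact (hs 0).nonempty.some_mem
  · exact hg_mem (n + 1) _

theorem finite_setOf_inter_nonempty_of_subset {α ι : Type*} {Δ : ι → Set α}
    (hΔ : Pairwise (Disjoint on Δ)) {C : Set α} {k : ι} (hC : C ⊆ Δ k) :
    {j | (C ∩ Δ j).Nonempty}.Finite := by
  refine (finite_singleton k).subset fun j ⟨x, hxC, hxj⟩ => ?_
  by_contra hjk
  exact (hΔ (Ne.symm hjk)).le_bot ⟨hC hxC, hxj⟩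

theorem infinite_setOf_iUnion_inter_infinite {α ι κ : Type*} [Infinite ι] {Δ : κ → Set α}
    {B : ι → Set α} {f : ι → κ} (hf : Injective f) (hB : ∀ i, (B i ∩ Δ (f i)).Infinite) :
    {j | ((⋃ i, B i) ∩ Δ j).Infinite}.Infinite := by
  refine (infinite_range_of_injective hf).mono ?_
  rintro _ ⟨i, rfl⟩
  exact (hB i).mono (inter_subset_inter_left _ (subset_iUnion B i))

theorem shrinking_condition_example_general
    (Δ : ℕ → Set ℕ)
    (hdisj : ∀ i j, i ≠ j → Δ i ∩ Δ j = ∅) :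
    ∀ A : ℕ → Set ℕ,
      (∀ i, A i ∉ {B : Set ℕ | {j : ℕ | (B ∩ Δ j).Infinite}.Finite}) →
      ∃ B : ℕ → Set ℕ,
        (∀ i, B i ∈ {B' : Set ℕ | {j : ℕ | (B' ∩ Δ j).Nonempty}.Finite} ∧ B i ⊆ A i) ∧
        (⋃ i, B i) ∉ {B' : Set ℕ | {j : ℕ | (B' ∩ Δ j).Infinite}.Finite} := by
  intro A hA
  have hΔ : Pairwise (Disjoint on Δ) := fun i j hij =>
    disjoint_iff_inter_eq_empty.mpr (hdisj i j hij)
  obtain ⟨f, hf_mono, hf_mem⟩ :=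
    exists_strictMono_forall_mem (s := fun i => {j | (A i ∩ Δ j).Infinite}) hA
  refine ⟨fun i => A i ∩ Δ (f i), fun i => ⟨?_, inter_subset_left⟩, ?_⟩
  · exact finite_setOf_inter_nonempty_of_subset hΔ inter_subset_right
  · refine infinite_setOf_iUnion_inter_infinite hf_mono.injective fun i => ?_
    rw [inter_assoc, inter_self]
    exact hf_mem i

theorem shrinking_condition_example
    (Δ : ℕ → Set ℕ) (hinf : ∀ j, (Δ j).Infinite)
    (hdisj : ∀ i j, i ≠ j → Δ i ∩ Δ j = ∅) (hcov : (⋃ j, Δ j) = Set.univ) :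
    ∀ A : ℕ → Set ℕ,
      (∀ i, A i ∉ {B : Set ℕ | {j : ℕ | (B ∩ Δ j).Infinite}.Finite}) →
      ∃ B : ℕ → Set ℕ,
        (∀ i, B i ∈ {B' : Set ℕ | {j : ℕ | (B' ∩ Δ j).Nonempty}.Finite} ∧ B i ⊆ A i) ∧
        (⋃ i, B i) ∉ {B' : Set ℕ | {j : ℕ | (B' ∩ Δ j).Infinite}.Finite} :=
  shrinking_condition_example_general Δ hdisj
end

section
/- Let X be a first countable topological space and I, K admissible ideals on S. If shrinking condition A(I, K) holds, then X is I-Fréchet compact implies X is I^K-Fréchet compact. -/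
open Set Topology

attribute [local instance] Classical.propDecidable

variable {S X : Type*}

/-! If `f : A → Y \ {α}` is `I`-convergent to `α` and `U` is a countable antitone neighbourhood
basis at `α`, each set `{s ∈ A | f s ∈ U n}` is `I`-nonthin. Shrinking condition `A(I, K)` turns
these into sets `B n ∈ K` whose union `M` is still `I`-nonthin, and `f` is `K`-convergent on `M`:
since `B i ⊆ f⁻¹' U i ⊆ f⁻¹' U n` for `i ≥ n`, only the `K`-small `B 0, …, B (n-1)` can leave
`U n`. Hence `M` and `f` witness an `I^K_{ev}`-limit point. -/

namespace IsIdeal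

variable {I : Set (Set S)}

theorem biUnion_finset_mem {ι : Type*} (hI : IsIdeal I) (s : Finset ι) {T : ι → Set S}
    (hT : ∀ i ∈ s, T i ∈ I) : (⋃ i ∈ s, T i) ∈ I := by
  induction s using Finset.induction_on with
  | empty => simpa using hI.1
  | insert i s _ ih =>
    rw [Finset.set_biUnion_insert]
    exact hI.2.2 (hT i (Finset.mem_insert_self i s))
      (ih fun j hj => hT j (Finset.mem_insert_of_mem hj))

theorem notMem_of_subset_union (hI : IsIdeal I) {A B C : Set S} (hA : A ∉ I)
    (hABC : A ⊆ B ∪ C) (hC : C ∈ I) : B ∉ I :=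
  fun hB => hA (hI.2.1 (hI.2.2 hB hC) hABC)

end IsIdeal

section Convergence

variable [TopologicalSpace X] {I K : Set (Set S)} {A : Set S} {f : S → X} {α : X}

theorem KConvOn.preimage_notMem_of_mem_nhds (hconv : KConvOn I A f α) (hI : IsIdeal I)
    (hA : A ∉ I) {N : Set X} (hN : N ∈ 𝓝 α) : {s ∈ A | f s ∈ N} ∉ I := by
  refine hI.notMem_of_subset_union hA (C := {s ∈ A | f s ∉ interior N}) ?_
    (hconv _ isOpen_interior (mem_interior_iff_mem_nhds.2 hN))
  intro s hs
  by_cases hsN : f s ∈ interior N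
  · exact Or.inl ⟨hs, interior_subset hsN⟩
  · exact Or.inr ⟨hs, hsN⟩

theorem kConvOn_iUnion_of_hasAntitoneBasis (hK : IsIdeal K) {U : ℕ → Set X}
    (hU : (𝓝 α).HasAntitoneBasis U) {B : ℕ → Set S} (hBK : ∀ i, B i ∈ K)
    (hBU : ∀ i, ∀ s ∈ B i, f s ∈ U i) : KConvOn K (⋃ i, B i) f α := by
  intro W hW hαW
  obtain ⟨n, hnW⟩ := hU.mem_iff.1 (hW.mem_nhds hαW)
  refine hK.2.1 (hK.biUnion_finset_mem (Finset.range n) fun i _ => hBK i) ?_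
  rintro s ⟨hs, hsW⟩
  obtain ⟨i, hi⟩ := mem_iUnion.1 hs
  have hin : i < n := by
    by_contra! hni
    exact hsW (hnW (hU.antitone hni (hBU i s hi)))
  exact mem_biUnion (Finset.mem_range.2 hin) hi

theorem IKConvOn.of_kConvOn (hI : ∅ ∈ I) (hconv : KConvOn K A f α) : IKConvOn I K A f α := by
  refine ⟨A, subset_rfl, by rwa [sdiff_self], fun U hU hαU => ?_⟩
  convert hconv U hU hαU using 1
  ext s
  simp +contextual

theorem ikEvLimitPt_of_kConvOn {Y : Set X} (hI : ∅ ∈ I) (hA : A ∉ I)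
    (hfY : ∀ s ∈ A, f s ∈ Y \ {α}) (hconv : KConvOn K A f α) : IKEvLimitPt I K Y α := by
  have hne : {s ∈ A | f s ≠ α} = A := sep_eq_self_iff_mem_true.2 fun s hs => (hfY s hs).2
  exact ⟨A, hA, f, hfY, hne.symm ▸ hA, IKConvOn.of_kConvOn hI hconv⟩

end Convergence

theorem IFrechet_implies_IKFrechet_of_shrinking [TopologicalSpace X]
    [FirstCountableTopology X]
    (I K : Set (Set S)) (hI : IsAdmissible I) (hK : IsAdmissible K)
    (hshrink : ∀ A : ℕ → Set S, (∀ i, A i ∉ I) →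
      ∃ B : ℕ → Set S, (∀ i, B i ∈ K ∧ B i ⊆ A i) ∧ (⋃ i, B i) ∉ I)
    (h : IFrechetCompact I X) : IKFrechetCompact I K X := by
  intro Y hY
  obtain ⟨α, A, hA, f, hfY, -, hconv⟩ := h Y hY
  obtain ⟨U, hU⟩ := (𝓝 α).exists_antitone_basis
  obtain ⟨B, hB, hBI⟩ := hshrink (fun n => {s ∈ A | f s ∈ U n})
    fun n => hconv.preimage_notMem_of_mem_nhds hI.1 hA (hU.mem n)
  have hBA : (⋃ i, B i) ⊆ A := iUnion_subset fun i s hs => ((hB i).2 hs).1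
  exact ⟨α, ikEvLimitPt_of_kConvOn hI.1.1 hBI (fun s hs => hfY s (hBA hs))
    (kConvOn_iUnion_of_hasAntitoneBasis hK.1 hU (fun i => (hB i).1)
      fun i s hs => ((hB i).2 hs).2)⟩
end

section
/- For any ideal I on ω, every first countable Fréchet compact (limit point compact) T₁ topological space is I-Fréchet compact. -/
open Set Topology

attribute [local instance] Classical.propDecidable

variable {S X : Type*}

/-! By first countability, `α ∈ closure (Y \ {α})` is witnessed by a sequence in `Y \ {α}`
converging to `α`. Ordinary convergence of a sequence is `I`-convergence, because an admissible
ideal contains every finite set. -/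

open Filter

theorem IsAdmissible.mem_of_finite {I : Set (Set S)} (hI : IsAdmissible I) {A : Set S}
    (hA : A.Finite) : A ∈ I := by
  obtain ⟨⟨hempty, -, hunion⟩, -, hsingle⟩ := hI
  refine hA.induction_on_subset _ hempty fun {a s} _ _ _ hs => ?_
  simpa only [singleton_union] using hunion (hsingle a) hs

theorem IsAdmissible.kConvOn_of_tendsto_cofinite [TopologicalSpace X] {I : Set (Set S)}
    (hI : IsAdmissible I) (A : Set S) {f : S → X} {x : X} (hf : Tendsto f cofinite (𝓝 x)) :
    KConvOn I A f x := by
  intro U hU hxU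
  have hfin : {s | f s ∉ U}.Finite := mem_cofinite.mp (hf (hU.mem_nhds hxU))
  exact hI.1.2.1 (hI.mem_of_finite hfin) fun s hs => hs.2

theorem IsAdmissible.iEvLimitPt_of_tendsto_cofinite [TopologicalSpace X] {I : Set (Set S)}
    (hI : IsAdmissible I) {Y : Set X} {α : X} {f : S → X} (hfY : ∀ s, f s ∈ Y \ {α})
    (hf : Tendsto f cofinite (𝓝 α)) : IEvLimitPt I Y α := by
  have hne : {s ∈ (univ : Set S) | f s ≠ α} = univ :=
    eq_univ_of_forall fun s => ⟨trivial, (hfY s).2⟩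
  refine ⟨univ, hI.2.1, f, fun s _ => hfY s, ?_, ?_⟩
  · rw [hne]
    exact hI.2.1
  · exact hI.kConvOn_of_tendsto_cofinite univ hf

theorem frechet_implies_IFrechet_of_T1_general [TopologicalSpace X]
    [FirstCountableTopology X]
    (I : Set (Set ℕ)) (hI : IsAdmissible I)
    (h : ∀ Y : Set X, Y.Infinite → ∃ α : X, α ∈ closure (Y \ {α})) :
    IFrechetCompact I X := by
  intro Y hY
  obtain ⟨α, hα⟩ := h Y hY
  obtain ⟨f, hfY, hf⟩ := mem_closure_iff_seq_limit.mp hα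
  exact ⟨α, hI.iEvLimitPt_of_tendsto_cofinite hfY (Nat.cofinite_eq_atTop ▸ hf)⟩

theorem frechet_implies_IFrechet_of_T1 [TopologicalSpace X]
    [FirstCountableTopology X] [T1Space X]
    (I : Set (Set ℕ)) (hI : IsAdmissible I)
    (h : ∀ Y : Set X, Y.Infinite → ∃ α : X, α ∈ closure (Y \ {α})) :
    IFrechetCompact I X :=
  frechet_implies_IFrechet_of_T1_general I hI h
end

section
/- Every I^K-closed subset of an I^K-Fréchet compact topological space is I^K-Fréchet compact (in the subspace topology). -/
open Set Topology

attribute [local instance] Classical.propDecidable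

variable {S X : Type*}

theorem IKEvLimitPt.mem_IKClosureSet [TopologicalSpace X] {I K : Set (Set S)} {A : Set X}
    {α : X} (hα : IKEvLimitPt I K A α) : α ∈ IKClosureSet I K A :=
  let ⟨B, hB, f, hf, _, hconv⟩ := hα
  ⟨B, hB, f, fun s hs => (hf s hs).1, hconv⟩

theorem IKClosureSet_mono [TopologicalSpace X] {I K : Set (Set S)} {A C : Set X}
    (hAC : A ⊆ C) : IKClosureSet I K A ⊆ IKClosureSet I K C :=
  fun _ ⟨B, hB, f, hf, hconv⟩ => ⟨B, hB, f, fun s hs => hAC (hf s hs), hconv⟩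

theorem IKClosed_subset_IKFrechet_general [TopologicalSpace X]
    (I K : Set (Set S))
    (h : IKFrechetCompact I K X)
    (Y : Set X) (hY : IKClosureSet I K Y = Y) :
    ∀ A : Set X, A ⊆ Y → A.Infinite → ∃ α ∈ Y, IKEvLimitPt I K A α := by
  intro A hAY hA
  obtain ⟨α, hα⟩ := h A hA
  exact ⟨α, hY ▸ IKClosureSet_mono hAY hα.mem_IKClosureSet, hα⟩

theorem IKClosed_subset_IKFrechet [TopologicalSpace X]
    (I K : Set (Set S)) (hI : IsIdeal I) (hK : IsIdeal K)
    (h : IKFrechetCompact I K X)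
    (Y : Set X) (hY : IKClosureSet I K Y = Y) :
    ∀ A : Set X, A ⊆ Y → A.Infinite → ∃ α ∈ Y, IKEvLimitPt I K A α :=
  IKClosed_subset_IKFrechet_general I K h Y hY
end

section
/- Every I-sequential Hausdorff Fréchet compact (limit point compact) topological space is I-Fréchet compact. -/
open Set Topology

attribute [local instance] Classical.propDecidable

variable {S X : Type*}

/-- `X` is `I`-sequential: every `I`-closed set is closed. -/
def ISequential (I : Set (Set S)) (X : Type*) [TopologicalSpace X] : Prop :=
  ∀ C : Set X, KClosureSet I C = C → IsClosed C

/-! If an infinite set `Y` had no `I_ev`-limit point, every subset of `Y` would be `I`-closed: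
a point `x ∉ C` in the `I`-closure of `C ⊆ Y` is reached by a function into `C \ {x}` on an
`I`-nonthin domain, i.e. it is an `I_ev`-limit point of `Y`. By `I`-sequentiality each
`Y \ {α}` is then closed, which contradicts `α ∈ closure (Y \ {α})`. -/

theorem kConvOn_const [TopologicalSpace X] {K : Set (Set S)} (hK : ∅ ∈ K) (A : Set S) (x : X) :
    KConvOn K A (fun _ => x) x := by
  intro U _ hxU
  simpa [hxU] using hK

theorem subset_kClosureSet [TopologicalSpace X] {K : Set (Set S)} (hK : ∅ ∈ K)
    (huniv : univ ∉ K) (C : Set X) : C ⊆ KClosureSet K C :=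
  fun x hx => ⟨univ, huniv, fun _ => x, fun _ _ => hx, kConvOn_const hK univ x⟩

theorem iEvLimitPt_of_mem_kClosureSet_of_notMem [TopologicalSpace X] {I : Set (Set S)}
    {C : Set X} {x : X} (hx : x ∈ KClosureSet I C) (hxC : x ∉ C) : IEvLimitPt I C x := by
  obtain ⟨A, hA, f, hf, hconv⟩ := hx
  have hne : ∀ s ∈ A, f s ≠ x := fun s hs hfx => hxC (hfx ▸ hf s hs)
  have hA_eq : {s ∈ A | f s ≠ x} = A := sep_eq_self_iff_mem_true.mpr hne
  exact ⟨A, hA, f, fun s hs => ⟨hf s hs, hne s hs⟩, hA_eq.symm ▸ hA, hconv⟩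

theorem IEvLimitPt.mono [TopologicalSpace X] {I : Set (Set S)} {C Y : Set X} {x : X}
    (hCY : C ⊆ Y) (h : IEvLimitPt I C x) : IEvLimitPt I Y x := by
  obtain ⟨A, hA, f, hf, hne, hconv⟩ := h
  exact ⟨A, hA, f, fun s hs => sdiff_subset_sdiff_left hCY (hf s hs), hne, hconv⟩

theorem kClosureSet_eq_self_of_forall_not_iEvLimitPt [TopologicalSpace X] {I : Set (Set S)}
    (hI : ∅ ∈ I) (huniv : univ ∉ I) {C : Set X} (hC : ∀ x, ¬ IEvLimitPt I C x) :
    KClosureSet I C = C := by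
  refine (subset_kClosureSet hI huniv C).antisymm' fun x hx => ?_
  by_contra hxC
  exact hC x (iEvLimitPt_of_mem_kClosureSet_of_notMem hx hxC)

theorem ISequential_frechet_implies_IFrechet_general [TopologicalSpace X]
    (I : Set (Set S)) (hI : IsAdmissible I)
    (hseq : ISequential I X)
    (hLPC : ∀ Y : Set X, Y.Infinite → ∃ α : X, α ∈ closure (Y \ {α})) :
    IFrechetCompact I X := by
  intro Y hY
  by_contra! hY_no_lim
  obtain ⟨α, hα⟩ := hLPC Y hY
  have hclosed : IsClosed (Y \ {α}) :=
    hseq _ <| kClosureSet_eq_self_of_forall_not_iEvLimitPt hI.1.1 hI.2.1 fun x hx =>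
      hY_no_lim x (hx.mono sdiff_subset)
  exact (hclosed.closure_subset hα).2 rfl

theorem ISequential_frechet_implies_IFrechet [TopologicalSpace X] [T2Space X]
    (I : Set (Set S)) (hI : IsAdmissible I)
    (hseq : ISequential I X)
    (hLPC : ∀ Y : Set X, Y.Infinite → ∃ α : X, α ∈ closure (Y \ {α})) :
    IFrechetCompact I X :=
  ISequential_frechet_implies_IFrechet_general I hI hseq hLPC
end
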